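/- There is a bijection between (isomorphism classes of) XY-graphs on n vertices and (isomorphism classes of) unbalanced split graphs on n + 1 vertices, given by adding a new vertex v, setting K = Y ∪ {v}, S = X, and joining all pairs of distinct vertices of K by edges. -/

import Mathlib

/-!
Adding to an XY-graph a vertex `v` joined to `Y` and completing `Y ∪ {v}` to a clique gives a split
graph with KS-partition `(K, S) = (Y ∪ {v}, X)` in which `v` has no neighbour in `S`. Such a
"swappable" vertex could be moved to `S`, so `ω + α > |K| + |S|` and no KS-partition is balanced.
Conversely, an unbalanced split graph has a KS-partition with `|K| = ω`, hence `|S| < α`, which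
forces a swappable vertex of `K`; deleting it and the edges inside `K` recovers an XY-graph.
Any two swappable vertices of a split graph are twins, so the transposition exchanging them is an
automorphism carrying one KS-partition to the other: this makes the inverse well defined on
isomorphism classes.
-/

open SimpleGraph
attribute [local instance] Classical.propDecidable

variable {V : Type*} [Fintype V] [DecidableEq V]

/-- A set of vertices is stable (independent) if no two of its elements are adjacent. -/
def IsStableSet (G : SimpleGraph V) (s : Set V) : Prop :=
  s.Pairwise fun a b => ¬ G.Adj a b

/-- The clique number ω(G). -/
noncomputable def omegaNum (G : SimpleGraph V) : ℕ :=
  Finset.univ.sup fun s : Finset V => if G.IsClique (s : Set V) then s.card else 0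

/-- The independence number α(G). -/
noncomputable def alphaNum (G : SimpleGraph V) : ℕ :=
  Finset.univ.sup fun s : Finset V => if IsStableSet G (s : Set V) then s.card else 0

/-- A KS-partition of `G`: a partition of the vertex set into a clique `K` and a stable set `S`. -/
def IsKSPartition (G : SimpleGraph V) (K S : Finset V) : Prop :=
  Disjoint K S ∧ K ∪ S = Finset.univ ∧ G.IsClique (K : Set V) ∧ IsStableSet G (S : Set V)

/-- `G` is a split graph. -/
def IsSplit (G : SimpleGraph V) : Prop := ∃ K S : Finset V, IsKSPartition G K S

/-- A split graph is balanced if it has a KS-partition with `|K| = ω(G)` and `|S| = α(G)`. -/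
def IsBalanced (G : SimpleGraph V) : Prop :=
  ∃ K S : Finset V, IsKSPartition G K S ∧ K.card = omegaNum G ∧ S.card = alphaNum G

/-- An XY-graph on `Fin n`: a bipartite graph with a specified bipartition, whose
distinguished part is `X` (the other part `Y` being the complement of `X`). -/
structure XYGraph (n : ℕ) where
  G : SimpleGraph (Fin n)
  X : Finset (Fin n)
  bip : ∀ u v : Fin n, G.Adj u v → (u ∈ X ∧ v ∉ X) ∨ (u ∉ X ∧ v ∈ X)

/-- No vertex of `Y` (the complement of `X`) is isolated. -/
def NoIsolateY {n : ℕ} (A : XYGraph n) : Prop :=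
  ∀ v : Fin n, v ∉ A.X → ∃ u ∈ A.X, A.G.Adj u v

/-- `X` contains a universal vertex: one adjacent to every vertex of `Y`. -/
def HasUniversalX {n : ℕ} (A : XYGraph n) : Prop :=
  ∃ x ∈ A.X, ∀ y : Fin n, y ∉ A.X → A.G.Adj x y

/-- Isomorphism of XY-graphs: a graph isomorphism preserving the distinguished part. -/
def XYIsoRel (n : ℕ) (A B : XYGraph n) : Prop :=
  ∃ e : A.G ≃g B.G, ∀ v : Fin n, v ∈ A.X ↔ e v ∈ B.X

/-- Isomorphism of unbalanced split graphs on `Fin (n+1)`. -/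
def USplitIsoRel (n : ℕ)
    (G H : {G : SimpleGraph (Fin (n + 1)) // IsSplit G ∧ ¬ IsBalanced G}) : Prop :=
  Nonempty (G.1 ≃g H.1)

theorem isStableSet_iff_isClique_compl {α : Type*} {G : SimpleGraph α} {s : Set α} :
    IsStableSet G s ↔ Gᶜ.IsClique s := by
  refine forall₂_congr fun a _ => forall₂_congr fun b _ => ?_
  simp only [compl_adj]
  tauto

theorem isClique_iff_isStableSet_compl {α : Type*} {G : SimpleGraph α} {s : Set α} :
    G.IsClique s ↔ IsStableSet Gᶜ s := by
  rw [isStableSet_iff_isClique_compl, compl_compl]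

section SplitGraphs

variable {G : SimpleGraph V} {K S : Finset V}

theorem alphaNum_eq_omegaNum_compl (G : SimpleGraph V) : alphaNum G = omegaNum Gᶜ := by
  refine Finset.sup_congr rfl fun s _ => ?_
  simp only [isStableSet_iff_isClique_compl]
  split_ifs <;> rfl

theorem card_le_omegaNum {C : Finset V} (hC : G.IsClique (C : Set V)) : C.card ≤ omegaNum G := by
  have := Finset.le_sup (f := fun s : Finset V =>
    if G.IsClique (s : Set V) then s.card else 0) (Finset.mem_univ C)
  rwa [if_pos hC] at this

theorem card_le_alphaNum {C : Finset V} (hC : IsStableSet G (C : Set V)) :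
    C.card ≤ alphaNum G := by
  rw [alphaNum_eq_omegaNum_compl]
  exact card_le_omegaNum (isStableSet_iff_isClique_compl.mp hC)

theorem exists_isClique_card_eq_omegaNum (G : SimpleGraph V) :
    ∃ C : Finset V, G.IsClique (C : Set V) ∧ C.card = omegaNum G := by
  obtain ⟨C, -, hC⟩ := Finset.exists_mem_eq_sup Finset.univ Finset.univ_nonempty
    fun s : Finset V => if G.IsClique (s : Set V) then s.card else 0
  by_cases h : G.IsClique (C : Set V)
  · exact ⟨C, h, by rw [omegaNum, hC, if_pos h]⟩
  · exact ⟨∅, by simp, by rw [omegaNum, hC, if_neg h, Finset.card_empty]⟩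

theorem IsKSPartition.of_forall_mem_iff (hmem : ∀ x, x ∈ S ↔ x ∉ K)
    (hK : G.IsClique (K : Set V)) (hS : IsStableSet G (S : Set V)) : IsKSPartition G K S :=
  ⟨Finset.disjoint_left.mpr fun x hK hS => (hmem x).mp hS hK,
    Finset.eq_univ_of_forall fun x => by by_cases x ∈ K <;> simp_all, hK, hS⟩

namespace IsKSPartition

theorem mem_right_iff (h : IsKSPartition G K S) (x : V) : x ∈ S ↔ x ∉ K := by
  have hx : x ∈ K ∪ S := h.2.1 ▸ Finset.mem_univ x
  have := @Finset.disjoint_left.mp h.1 x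
  rw [Finset.mem_union] at hx
  tauto

theorem card_add_card (h : IsKSPartition G K S) : K.card + S.card = Fintype.card V := by
  rw [← Finset.card_union_of_disjoint h.1, h.2.1, Finset.card_univ]

theorem compl (h : IsKSPartition G K S) : IsKSPartition Gᶜ S K :=
  ⟨h.1.symm, by rw [Finset.union_comm, h.2.1], isStableSet_iff_isClique_compl.mp h.2.2.2,
    isClique_iff_isStableSet_compl.mp h.2.2.1⟩

theorem insert_erase (h : IsKSPartition G K S) {s : V}
    (hadj : ∀ k ∈ K, G.Adj s k) : IsKSPartition G (insert s K) (S.erase s) := by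
  refine of_forall_mem_iff (fun x => ?_) ?_ fun a ha b hb =>
    h.2.2.2 (Finset.mem_of_mem_erase ha) (Finset.mem_of_mem_erase hb)
  · by_cases hx : x = s <;> simp [hx, h.mem_right_iff]
  · rw [Finset.coe_insert]
    exact h.2.2.1.insert fun k hk _ => hadj k hk

theorem erase_insert (h : IsKSPartition G K S) {k : V} (hk : k ∈ K)
    (hadj : ∀ s ∈ S, ¬ G.Adj k s) : IsKSPartition G (K.erase k) (insert k S) := by
  have := h.compl.insert_erase fun s hs =>
    (compl_adj G k s).mpr ⟨fun hks => (h.mem_right_iff s).mp hs (hks ▸ hk), hadj s hs⟩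
  simpa using this.compl

theorem exists_adj_of_card_lt_omegaNum (h : IsKSPartition G K S) (hlt : K.card < omegaNum G) :
    ∃ s ∈ S, ∀ k ∈ K, G.Adj s k := by
  obtain ⟨C, hC, hCcard⟩ := exists_isClique_card_eq_omegaNum G
  have hsdiff : (C \ K).card ≤ 1 := Finset.card_le_one.mpr fun a ha b hb => by
    by_contra hab
    rw [Finset.mem_sdiff] at ha hb
    exact (h.2.2.2 ((h.mem_right_iff a).mpr ha.2) ((h.mem_right_iff b).mpr hb.2) hab)
      (hC ha.1 hb.1 hab)
  have hinter := Finset.card_inter_add_card_sdiff C K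
  have hinterK : (C ∩ K).card ≤ K.card := Finset.card_le_card Finset.inter_subset_right
  have hKC : K ⊆ C := by
    have hle : K.card ≤ (C ∩ K).card := by omega
    rw [← Finset.eq_of_subset_of_card_le Finset.inter_subset_right hle]
    exact Finset.inter_subset_left
  obtain ⟨s, hs⟩ : (C \ K).Nonempty := Finset.card_pos.mp (by omega)
  rw [Finset.mem_sdiff] at hs
  exact ⟨s, (h.mem_right_iff s).mpr hs.2, fun k hk =>
    hC hs.1 (hKC hk) fun hsk => hs.2 (hsk ▸ hk)⟩

theorem exists_not_adj_of_card_lt_alphaNum (h : IsKSPartition G K S)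
    (hlt : S.card < alphaNum G) : ∃ k ∈ K, ∀ s ∈ S, ¬ G.Adj k s := by
  rw [alphaNum_eq_omegaNum_compl] at hlt
  obtain ⟨k, hk, hadj⟩ := h.compl.exists_adj_of_card_lt_omegaNum hlt
  exact ⟨k, hk, fun s hs => ((compl_adj G k s).mp (hadj s hs)).2⟩

end IsKSPartition

theorem IsSplit.exists_isKSPartition_card_eq_omegaNum (hG : IsSplit G) :
    ∃ K S : Finset V, IsKSPartition G K S ∧ K.card = omegaNum G := by
  obtain ⟨K₀, S₀, h₀⟩ := hG
  obtain ⟨⟨K, S⟩, hKS, hmax⟩ :=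
    (Finset.univ.filter fun p : Finset V × Finset V => IsKSPartition G p.1 p.2).exists_max_image
      (fun p => p.1.card) ⟨(K₀, S₀), by simpa using h₀⟩
  simp only [Finset.mem_filter, Finset.mem_univ, true_and, Prod.forall] at hKS hmax
  refine ⟨K, S, hKS, le_antisymm (card_le_omegaNum hKS.2.2.1) (not_lt.mp fun hlt => ?_)⟩
  obtain ⟨s, hs, hadj⟩ := hKS.exists_adj_of_card_lt_omegaNum hlt
  have := hmax _ _ (hKS.insert_erase hadj)
  rw [Finset.card_insert_of_notMem ((hKS.mem_right_iff s).mp hs)] at this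
  omega

end SplitGraphs

/-- `k` is swappable: `(K \ {k}, S ∪ {k})` is a KS-partition as well. -/
structure IsSwappableKSPartition (G : SimpleGraph V) (K S : Finset V) (k : V) : Prop where
  isKSPartition : IsKSPartition G K S
  mem : k ∈ K
  not_adj : ∀ s ∈ S, ¬ G.Adj k s

def SimpleGraph.Iso.swapOfTwins {α : Type*} [DecidableEq α] {G : SimpleGraph α} {a b : α}
    (h : ∀ x, x ≠ a → x ≠ b → (G.Adj a x ↔ G.Adj b x)) : G ≃g G where
  toEquiv := Equiv.swap a b
  map_rel_iff' {u v} := by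
    have key : ∀ x, x ≠ a → x ≠ b → ∀ y, G.Adj (Equiv.swap a b y) x ↔ G.Adj y x := by
      intro x hxa hxb y
      rcases eq_or_ne y a with rfl | hya
      · rw [Equiv.swap_apply_left, h x hxa hxb]
      rcases eq_or_ne y b with rfl | hyb
      · rw [Equiv.swap_apply_right, h x hxa hxb]
      rw [Equiv.swap_apply_of_ne_of_ne hya hyb]
    by_cases hv : v ≠ a ∧ v ≠ b
    · rw [Equiv.swap_apply_of_ne_of_ne hv.1 hv.2]
      exact key v hv.1 hv.2 u
    by_cases hu : u ≠ a ∧ u ≠ b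
    · rw [Equiv.swap_apply_of_ne_of_ne hu.1 hu.2, G.adj_comm, G.adj_comm u]
      exact key u hu.1 hu.2 v
    have hu' : u = a ∨ u = b := by tauto
    have hv' : v = a ∨ v = b := by tauto
    rcases hu' with rfl | rfl <;> rcases hv' with rfl | rfl <;> simp [G.adj_comm]

section Swappable

variable {G : SimpleGraph V} {K S : Finset V} {k : V}

theorem IsSplit.exists_isSwappableKSPartition (hG : IsSplit G) (hu : ¬ IsBalanced G) :
    ∃ K S k, IsSwappableKSPartition G K S k := by
  obtain ⟨K, S, h, hK⟩ := hG.exists_isKSPartition_card_eq_omegaNum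
  have hlt : S.card < alphaNum G :=
    lt_of_le_of_ne (card_le_alphaNum h.2.2.2) fun hS => hu ⟨K, S, h, hK, hS⟩
  obtain ⟨k, hk, hadj⟩ := h.exists_not_adj_of_card_lt_alphaNum hlt
  exact ⟨K, S, k, h, hk, hadj⟩

namespace IsSwappableKSPartition

theorem not_isBalanced (h : IsSwappableKSPartition G K S k) : ¬ IsBalanced G := by
  rintro ⟨K', S', h', hK', hS'⟩
  have hω := card_le_omegaNum h.isKSPartition.2.2.1
  have hα := card_le_alphaNum (h.isKSPartition.erase_insert h.mem h.not_adj).2.2.2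
  rw [Finset.card_insert_of_notMem fun hkS => (h.isKSPartition.mem_right_iff k).mp hkS h.mem]
    at hα
  have := h.isKSPartition.card_add_card
  have := h'.card_add_card
  omega

theorem adj_iff (h : IsSwappableKSPartition G K S k) {x : V} (hx : x ≠ k) :
    G.Adj k x ↔ x ∈ K :=
  ⟨fun hadj => by_contra fun hxK => h.not_adj x ((h.isKSPartition.mem_right_iff x).mpr hxK) hadj,
    fun hxK => h.isKSPartition.2.2.1 h.mem hxK hx.symm⟩

theorem map (h : IsSwappableKSPartition G K S k) {W : Type*} [Fintype W] [DecidableEq W]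
    {G' : SimpleGraph W} (φ : G ≃g G') :
    IsSwappableKSPartition G' (K.map φ.toEquiv.toEmbedding) (S.map φ.toEquiv.toEmbedding)
      (φ k) := by
  have hmem : ∀ {T : Finset V} {x : W}, x ∈ T.map φ.toEquiv.toEmbedding ↔ φ.symm x ∈ T :=
    Finset.mem_map_equiv
  have hadj : ∀ a b : W, G'.Adj a b ↔ G.Adj (φ.symm a) (φ.symm b) := fun a b =>
    φ.symm.map_adj_iff.symm
  refine ⟨.of_forall_mem_iff (fun x => ?_) (fun a ha b hb hab => ?_) fun a ha b hb hab => ?_,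
    hmem.mpr (by simpa using h.mem), fun s hs => ?_⟩
  · simpa only [hmem] using h.isKSPartition.mem_right_iff _
  · exact (hadj a b).mpr
      (h.isKSPartition.2.2.1 (hmem.mp ha) (hmem.mp hb) (φ.symm.injective.ne hab))
  · exact (hadj a b).not.mpr
      (h.isKSPartition.2.2.2 (hmem.mp ha) (hmem.mp hb) (φ.symm.injective.ne hab))
  · simpa [hadj] using h.not_adj _ (hmem.mp hs)

variable {K₁ S₁ K₂ S₂ : Finset V} {k₁ k₂ : V}

theorem mem_right_of_mem_right (h₁ : IsSwappableKSPartition G K₁ S₁ k₁)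
    (h₂ : IsSwappableKSPartition G K₂ S₂ k₂) (hk₂ : k₂ ∈ S₁) : k₁ ∈ S₂ := by
  rw [h₂.isKSPartition.mem_right_iff]
  intro hk₁
  have hne : k₁ ≠ k₂ := fun h => (h₁.isKSPartition.mem_right_iff k₂).mp hk₂ (h ▸ h₁.mem)
  exact h₁.not_adj k₂ hk₂ ((h₂.adj_iff hne).mpr hk₁).symm

theorem mem_left_of_mem_left (h₁ : IsSwappableKSPartition G K₁ S₁ k₁)
    (h₂ : IsSwappableKSPartition G K₂ S₂ k₂) {x : V} (hx₁ : x ≠ k₁) (hx₂ : x ≠ k₂)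
    (hx : x ∈ K₁) : x ∈ K₂ := by
  by_contra hxK₂
  have hxS₂ : x ∈ S₂ := (h₂.isKSPartition.mem_right_iff x).mpr hxK₂
  have hk₂S₁ : k₂ ∈ S₁ := (h₁.isKSPartition.mem_right_iff k₂).mpr fun hk₂K₁ =>
    h₂.not_adj x hxS₂ (h₁.isKSPartition.2.2.1 hk₂K₁ hx hx₂.symm)
  exact h₂.isKSPartition.2.2.2 (mem_right_of_mem_right h₁ h₂ hk₂S₁) hxS₂ hx₁.symm
    ((h₁.adj_iff hx₁).mpr hx)

/-- `k₁` and `k₂` are twins, so exchanging them is an automorphism. -/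
theorem exists_iso (h₁ : IsSwappableKSPartition G K₁ S₁ k₁)
    (h₂ : IsSwappableKSPartition G K₂ S₂ k₂) :
    ∃ τ : G ≃g G, τ k₁ = k₂ ∧ ∀ x, x ∈ S₁ ↔ τ x ∈ S₂ := by
  have hK : ∀ x, x ≠ k₁ → x ≠ k₂ → (x ∈ K₁ ↔ x ∈ K₂) := fun x hx₁ hx₂ =>
    ⟨mem_left_of_mem_left h₁ h₂ hx₁ hx₂, mem_left_of_mem_left h₂ h₁ hx₂ hx₁⟩
  refine ⟨Iso.swapOfTwins fun x hx₁ hx₂ => by rw [h₁.adj_iff hx₁, h₂.adj_iff hx₂, hK x hx₁ hx₂],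
    Equiv.swap_apply_left _ _, fun x => ?_⟩
  change x ∈ S₁ ↔ Equiv.swap k₁ k₂ x ∈ S₂
  rcases eq_or_ne x k₁ with rfl | hx₁
  · rw [Equiv.swap_apply_left, h₁.isKSPartition.mem_right_iff, h₂.isKSPartition.mem_right_iff]
    exact iff_of_false (not_not.mpr h₁.mem) (not_not.mpr h₂.mem)
  rcases eq_or_ne x k₂ with rfl | hx₂
  · rw [Equiv.swap_apply_right]
    exact ⟨mem_right_of_mem_right h₁ h₂, mem_right_of_mem_right h₂ h₁⟩
  rw [Equiv.swap_apply_of_ne_of_ne hx₁ hx₂, h₁.isKSPartition.mem_right_iff,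
    h₂.isKSPartition.mem_right_iff, hK x hx₁ hx₂]

end IsSwappableKSPartition

end Swappable

section FinSucc

variable {n : ℕ}

theorem SimpleGraph.ext_of_adj_last_of_adj_castSucc {G H : SimpleGraph (Fin (n + 1))}
    (hlast : ∀ w : Fin n, G.Adj (Fin.last n) w.castSucc ↔ H.Adj (Fin.last n) w.castSucc)
    (hcastSucc : ∀ u w : Fin n, G.Adj u.castSucc w.castSucc ↔ H.Adj u.castSucc w.castSucc) :
    G = H := by
  ext a b
  induction a using Fin.lastCases with
  | last =>
    induction b using Fin.lastCases with
    | last => simp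
    | cast w => exact hlast w
  | cast u =>
    induction b using Fin.lastCases with
    | last => rw [G.adj_comm, H.adj_comm]; exact hlast u
    | cast w => exact hcastSucc u w

theorem Equiv.exists_restrict_castSucc (e : Fin (n + 1) ≃ Fin (n + 1))
    (he : e (Fin.last n) = Fin.last n) :
    ∃ ε : Fin n ≃ Fin n, ∀ u, (ε u).castSucc = e u.castSucc := by
  refine ⟨Equiv.removeNone (finSuccEquivLast.symm.trans (e.trans finSuccEquivLast)), fun u => ?_⟩
  obtain ⟨v, hv⟩ : ∃ v : Fin n, v.castSucc = e u.castSucc := Fin.exists_castSucc_eq.mpr fun h =>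
    Fin.castSucc_ne_last u (e.injective (h.trans he.symm))
  have := Equiv.removeNone_some (finSuccEquivLast.symm.trans (e.trans finSuccEquivLast))
    (x := u) ⟨v, by simp [← hv]⟩
  simp_all [← hv]

theorem Equiv.exists_extend_castSucc (ε : Fin n ≃ Fin n) :
    ∃ e : Fin (n + 1) ≃ Fin (n + 1),
      e (Fin.last n) = Fin.last n ∧ ∀ u, e u.castSucc = (ε u).castSucc :=
  ⟨finSuccEquivLast.trans (ε.optionCongr.trans finSuccEquivLast.symm), by simp, by simp⟩

end FinSucc

attribute [ext] XYGraph

namespace XYGraph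

variable {n : ℕ}

/-- The clique `K = Y ∪ {v}` of the split graph; the new vertex `v` is `Fin.last n`. -/
def splitK (A : XYGraph n) : Finset (Fin (n + 1)) :=
  insert (Fin.last n) (A.Xᶜ.map Fin.castSuccEmb)

def splitS (A : XYGraph n) : Finset (Fin (n + 1)) :=
  A.X.map Fin.castSuccEmb

def toSplitGraph (A : XYGraph n) : SimpleGraph (Fin (n + 1)) :=
  A.G.map Fin.castSucc ⊔ SimpleGraph.fromRel fun a b => a ∈ A.splitK ∧ b ∈ A.splitK

variable {A B : XYGraph n} {u w : Fin n}

@[simp] theorem last_mem_splitK : Fin.last n ∈ A.splitK := Finset.mem_insert_self _ _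

@[simp] theorem castSucc_mem_splitK : u.castSucc ∈ A.splitK ↔ u ∉ A.X := by
  simp [splitK, Fin.castSucc_ne_last]

@[simp] theorem last_notMem_splitS : Fin.last n ∉ A.splitS := by
  simp [splitS, Fin.castSucc_ne_last]

@[simp] theorem castSucc_mem_splitS : u.castSucc ∈ A.splitS ↔ u ∈ A.X := by
  simp [splitS]

theorem toSplitGraph_adj_castSucc :
    A.toSplitGraph.Adj u.castSucc w.castSucc ↔ (u ≠ w ∧ u ∉ A.X ∧ w ∉ A.X) ∨ A.G.Adj u w := by
  have : A.G.Adj u w → u ≠ w := A.G.ne_of_adj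
  simp only [toSplitGraph, sup_adj, map_adj', fromRel_adj, Fin.castSucc_inj, ne_eq,
    castSucc_mem_splitK, exists_eq_right_right, exists_eq_right]
  tauto

theorem toSplitGraph_adj_last : A.toSplitGraph.Adj (Fin.last n) w.castSucc ↔ w ∉ A.X := by
  simp [toSplitGraph, map_adj', (Fin.castSucc_ne_last w).symm]

theorem isSwappableKSPartition_toSplitGraph (A : XYGraph n) :
    IsSwappableKSPartition A.toSplitGraph A.splitK A.splitS (Fin.last n) := by
  have hS : ∀ s ∈ A.splitS, ∃ u ∈ A.X, u.castSucc = s := by simp [splitS]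
  refine ⟨.of_forall_mem_iff (fun x => ?_) (fun a ha b hb hab => ?_)
    (fun a ha b hb _ hadj => ?_), last_mem_splitK, fun s hs => ?_⟩
  · induction x using Fin.lastCases <;> simp
  · exact (sup_adj ..).mpr (Or.inr ((fromRel_adj ..).mpr ⟨hab, Or.inl ⟨ha, hb⟩⟩))
  · obtain ⟨u, hu, rfl⟩ := hS a ha
    obtain ⟨w, hw, rfl⟩ := hS b hb
    rw [toSplitGraph_adj_castSucc] at hadj
    have := A.bip u w
    tauto
  · obtain ⟨w, hw, rfl⟩ := hS s hs
    rw [toSplitGraph_adj_last]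
    exact not_not.mpr hw

theorem isStableSet_splitS (A : XYGraph n) :
    IsStableSet A.toSplitGraph (A.splitS : Set (Fin (n + 1))) :=
  A.isSwappableKSPartition_toSplitGraph.isKSPartition.2.2.2

/-- Inverse of `toSplitGraph`: delete `Fin.last n` and the edges inside the clique `Sᶜ`. -/
def ofStable (H : SimpleGraph (Fin (n + 1))) (S : Finset (Fin (n + 1)))
    (hS : IsStableSet H (S : Set (Fin (n + 1)))) : XYGraph n where
  G :=
    { Adj u w := H.Adj u.castSucc w.castSucc ∧ (u.castSucc ∈ S ∨ w.castSucc ∈ S)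
      symm := ⟨fun _ _ h => ⟨h.1.symm, h.2.symm⟩⟩
      loopless := ⟨fun _ h => H.irrefl h.1⟩ }
  X := Finset.univ.filter fun u => u.castSucc ∈ S
  bip u w h := by
    have : ¬ (u.castSucc ∈ S ∧ w.castSucc ∈ S) := fun h' => hS h'.1 h'.2 h.1.ne h.1
    simp only [Finset.mem_filter, Finset.mem_univ, true_and]
    tauto

theorem ofStable_toSplitGraph (A : XYGraph n) :
    ofStable A.toSplitGraph A.splitS A.isStableSet_splitS = A := by
  ext u w
  · change A.toSplitGraph.Adj _ _ ∧ _ ↔ _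
    rw [toSplitGraph_adj_castSucc, castSucc_mem_splitS, castSucc_mem_splitS]
    have := A.bip u w
    tauto
  · simp [ofStable]

theorem toSplitGraph_ofStable {H : SimpleGraph (Fin (n + 1))} {K S : Finset (Fin (n + 1))}
    (h : IsSwappableKSPartition H K S (Fin.last n)) :
    (ofStable H S h.isKSPartition.2.2.2).toSplitGraph = H := by
  have hS : ∀ u : Fin n, u.castSucc ∈ S ↔ u.castSucc ∉ K := fun u =>
    h.isKSPartition.mem_right_iff _
  refine SimpleGraph.ext_of_adj_last_of_adj_castSucc (fun w => ?_) fun u w => ?_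
  · rw [toSplitGraph_adj_last, h.adj_iff (Fin.castSucc_ne_last w)]
    simp [ofStable, hS]
  · have hK : u.castSucc ∈ K → w.castSucc ∈ K → u ≠ w → H.Adj u.castSucc w.castSucc :=
      fun hu hw hne => h.isKSPartition.2.2.1 hu hw ((Fin.castSucc_injective n).ne hne)
    have hne : H.Adj u.castSucc w.castSucc → u ≠ w := fun hadj huw => hadj.ne (huw ▸ rfl)
    rw [toSplitGraph_adj_castSucc]
    simp only [ofStable, Finset.mem_filter, Finset.mem_univ, true_and, hS]
    tauto

theorem xyIsoRel_ofStable {H H' : SimpleGraph (Fin (n + 1))} {S S' : Finset (Fin (n + 1))}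
    (hS : IsStableSet H (S : Set (Fin (n + 1)))) (hS' : IsStableSet H' (S' : Set (Fin (n + 1))))
    (φ : H ≃g H') (hlast : φ (Fin.last n) = Fin.last n) (hmem : ∀ x, x ∈ S ↔ φ x ∈ S') :
    XYIsoRel n (ofStable H S hS) (ofStable H' S' hS') := by
  obtain ⟨ε, hε⟩ := φ.toEquiv.exists_restrict_castSucc hlast
  simp only [RelIso.coe_fn_toEquiv] at hε
  refine ⟨⟨ε, fun {u w} => ?_⟩, fun u => ?_⟩
  · change H'.Adj _ _ ∧ _ ↔ H.Adj _ _ ∧ _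
    rw [hε, hε, φ.map_adj_iff, ← hmem, ← hmem]
  · simp only [ofStable, Finset.mem_filter, Finset.mem_univ, true_and]
    change _ ↔ (ε u).castSucc ∈ S'
    rw [hε, hmem]

theorem nonempty_iso_toSplitGraph (h : XYIsoRel n A B) :
    Nonempty (A.toSplitGraph ≃g B.toSplitGraph) := by
  obtain ⟨ε, hX⟩ := h
  obtain ⟨e, hlast, hcs⟩ := ε.toEquiv.exists_extend_castSucc
  have : A.toSplitGraph = B.toSplitGraph.comap e := by
    refine SimpleGraph.ext_of_adj_last_of_adj_castSucc (fun w => ?_) fun u w => ?_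
    · simp [hlast, hcs, toSplitGraph_adj_last, hX]
    · simp [hcs, toSplitGraph_adj_castSucc, hX, ε.map_adj_iff]
  rw [this]
  exact ⟨Iso.comap e _⟩

theorem xyIsoRel_of_iso (g : A.toSplitGraph ≃g B.toSplitGraph) : XYIsoRel n A B := by
  obtain ⟨τ, hτ, hS⟩ := (A.isSwappableKSPartition_toSplitGraph.map g).exists_iso
    B.isSwappableKSPartition_toSplitGraph
  have h := xyIsoRel_ofStable A.isStableSet_splitS B.isStableSet_splitS (g.trans τ) hτ fun x => by
    rw [show (g.trans τ) x = τ (g x) from rfl, ← hS]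
    exact (Finset.mem_map' _).symm
  rwa [ofStable_toSplitGraph, ofStable_toSplitGraph] at h

theorem exists_iso_toSplitGraph {H : SimpleGraph (Fin (n + 1))} (hs : IsSplit H)
    (hu : ¬ IsBalanced H) : ∃ A : XYGraph n, Nonempty (A.toSplitGraph ≃g H) := by
  obtain ⟨K, S, k, h⟩ := hs.exists_isSwappableKSPartition hu
  let σ := Iso.map (Equiv.swap k (Fin.last n)) H
  have h' := h.map σ
  rw [show σ k = Fin.last n from Equiv.swap_apply_left _ _] at h'
  refine ⟨ofStable _ _ h'.isKSPartition.2.2.2, ?_⟩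
  rw [toSplitGraph_ofStable h']
  exact ⟨σ.symm⟩

end XYGraph

theorem Quot.map_bijective {α β : Type*} {r : α → α → Prop} {s : β → β → Prop}
    (hs : Equivalence s) (f : α → β) (hf : ∀ ⦃a b⦄, r a b → s (f a) (f b))
    (hinj : ∀ a b, s (f a) (f b) → r a b) (hsurj : ∀ b, ∃ a, s (f a) b) :
    Function.Bijective (Quot.map f hf) := by
  refine ⟨fun x y hxy => ?_, fun y => ?_⟩
  · induction x using Quot.ind
    induction y using Quot.ind
    exact Quot.sound (hinj _ _ (hs.eqvGen_iff.mp (Quot.eqvGen_exact hxy)))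
  · induction y using Quot.ind with
    | mk b =>
      obtain ⟨a, ha⟩ := hsurj b
      exact ⟨Quot.mk _ a, Quot.sound ha⟩

theorem equivalence_uSplitIsoRel (n : ℕ) : Equivalence (USplitIsoRel n) :=
  ⟨fun _ => ⟨Iso.refl⟩, fun ⟨e⟩ => ⟨e.symm⟩, fun ⟨e⟩ ⟨e'⟩ => ⟨e.trans e'⟩⟩

/-- There is a bijection between isomorphism classes of XY-graphs on `n` vertices and
isomorphism classes of unbalanced split graphs on `n + 1` vertices. -/
theorem xy_unbalanced_split_bijection (n : ℕ) :
    Nonempty (Quot (XYIsoRel n) ≃ Quot (USplitIsoRel n)) := by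
  let f (A : XYGraph n) : {G : SimpleGraph (Fin (n + 1)) // IsSplit G ∧ ¬ IsBalanced G} :=
    ⟨A.toSplitGraph, ⟨_, _, A.isSwappableKSPartition_toSplitGraph.isKSPartition⟩,
      A.isSwappableKSPartition_toSplitGraph.not_isBalanced⟩
  refine ⟨.ofBijective _ (Quot.map_bijective (equivalence_uSplitIsoRel n) f
    (fun _ _ h => XYGraph.nonempty_iso_toSplitGraph h) (fun _ _ ⟨g⟩ => XYGraph.xyIsoRel_of_iso g)
    fun H => ?_)⟩
  exact XYGraph.exists_iso_toSplitGraph H.2.1 H.2.2
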